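/- For every set A of size a+1 contained in [n]\{i}, SOS and nonnegativity imply ∑_{j ∈ A} v(s_{A\{j\}}, 0_{B∪{j}}, s_i) ≥ (|A| - 1) · v(s_A, 0_B, s_i). -/
import Mathlib


def SOS {n : ℕ} (v : (Fin n → NNReal) → ℝ) : Prop :=
  ∀ (i : Fin n) (s s' : Fin n → NNReal) (t : NNReal), s ≤ s' → s' i = s i → s i ≤ t →
    v (Function.update s' i t) - v s' ≤ v (Function.update s i t) - v s

def zeroOutside {n : ℕ} (s : Fin n → NNReal) (i : Fin n) (A : Finset (Fin n)) :
    Fin n → NNReal :=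
  fun j => if j = i ∨ j ∈ A then s j else 0

lemma update_zeroOutside {n : ℕ} (s : Fin n → NNReal) (i x : Fin n) (B : Finset (Fin n))
    (hx : x ≠ i) :
    Function.update (zeroOutside s i B) x (s x) = zeroOutside s i (insert x B) := by
  funext j
  by_cases hj : j = x
  · subst hj; simp [Function.update, zeroOutside]
  · simp [Function.update, hj, zeroOutside, Finset.mem_insert]

lemma sos_step {n : ℕ} (v : (Fin n → NNReal) → ℝ) (hsos : SOS v)
    (s : Fin n → NNReal) (i x : Fin n)
    (B C : Finset (Fin n)) (hBC : B ⊆ C) (hxi : x ≠ i) (hxC : x ∉ C) :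
    v (zeroOutside s i (insert x C)) - v (zeroOutside s i C) ≤
    v (zeroOutside s i (insert x B)) - v (zeroOutside s i B) := by
  have hxB : x ∉ B := fun h => hxC (hBC h)
  have h := hsos x (zeroOutside s i B) (zeroOutside s i C) (s x)
    (fun j => by
      by_cases h1 : j = i ∨ j ∈ B
      · have h2 : j = i ∨ j ∈ C := h1.imp id (fun h => hBC h)
        simp [zeroOutside, h1, h2]
      · simp [zeroOutside, h1])
    (by simp [zeroOutside, hxi, hxB, hxC])
    (by simp [zeroOutside, hxi, hxB])
  rwa [update_zeroOutside s i x B hxi, update_zeroOutside s i x C hxi] at h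

lemma key_lemma {n : ℕ} (v : (Fin n → NNReal) → ℝ)
    (hnonneg : ∀ s, 0 ≤ v s) (hsos : SOS v)
    (s : Fin n → NNReal) (i : Fin n) (A : Finset (Fin n)) (hiA : i ∉ A) :
    ∑ j ∈ A, v (zeroOutside s i (A.erase j)) ≥
      ((A.card : ℝ) - 1) * v (zeroOutside s i A) := by
  induction A using Finset.induction_on with
  | empty => simpa using hnonneg (zeroOutside s i ∅)
  | @insert x A' hx ih =>
    have hxi : x ≠ i := fun h => hiA (by simp [h])
    have hiA' : i ∉ A' := fun h => hiA (Finset.mem_insert_of_mem h)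
    have ih' := ih hiA'
    rw [Finset.sum_insert hx, Finset.erase_insert hx]
    have hterm : ∀ j ∈ A', v (zeroOutside s i ((insert x A').erase j)) ≥
        v (zeroOutside s i (A'.erase j)) + v (zeroOutside s i (insert x A'))
          - v (zeroOutside s i A') := by
      intro j hj
      have hjx : j ≠ x := fun h => hx (h ▸ hj)
      rw [Finset.erase_insert_of_ne hjx.symm]
      have := sos_step v hsos s i x (A'.erase j) A' (Finset.erase_subset _ _) hxi hx
      linarith
    have hsum : ∑ j ∈ A', v (zeroOutside s i ((insert x A').erase j)) ≥
        ∑ j ∈ A', (v (zeroOutside s i (A'.erase j)) + v (zeroOutside s i (insert x A'))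
          - v (zeroOutside s i A')) := Finset.sum_le_sum hterm
    rw [Finset.sum_sub_distrib, Finset.sum_add_distrib, Finset.sum_const,
      Finset.sum_const, nsmul_eq_mul, nsmul_eq_mul] at hsum
    rw [Finset.card_insert_of_notMem hx]
    push_cast
    nlinarith [hnonneg (zeroOutside s i (insert x A')), hnonneg (zeroOutside s i A')]

theorem stmt_5 {n : ℕ} (v : (Fin n → NNReal) → ℝ)
    (hnonneg : ∀ s, 0 ≤ v s) (hsos : SOS v)
    (s : Fin n → NNReal) (i : Fin n) (a : ℕ) (A : Finset (Fin n))
    (hA : A ⊆ Finset.univ.erase i) (hcard : A.card = a + 1) :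
    ∑ j ∈ A, v (zeroOutside s i (A.erase j)) ≥
      ((A.card : ℝ) - 1) * v (zeroOutside s i A) := by
  have hiA : i ∉ A := fun h => (Finset.mem_erase.mp (hA h)).1 rfl
  exact key_lemma v hnonneg hsos s i A hiA
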